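/- arXiv:2510.23332 — 4 statements merged into one kernel-verified Lean document; each statement's English description precedes it below -/
import Mathlib

section
/- Let P, Q_K be symmetric positive definite n×n matrices, A_K an n×n matrix, γ ∈ (0,1), with P = Q_K + γ A_K^T P A_K, and let Â_K = P^{1/2} A_K P^{-1/2}. Then the spectral norm of Â_K equals sqrt( (1/γ)(1 - λ_min(P^{-1/2} Q_K P^{-1/2})) ), where λ_min denotes the smallest eigenvalue. -/
/-!
Write `B = S A S⁻¹` with `S = P^{1/2}` and `M = S⁻¹ Q S⁻¹`. Conjugating the Lyapunov equation by
`S⁻¹` gives `Bᵀ B = γ⁻¹ (1 - M)`. Diagonalising `M = U diag(λ) Uᵀ` with `U` orthogonal turns this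
into `Bᵀ B = U diag(γ⁻¹ (1 - λᵢ)) Uᵀ`; positivity of `Bᵀ B` forces every `λᵢ ≤ 1`, so by the
C⋆-identity `‖B‖² = ‖Bᵀ B‖ = maxᵢ γ⁻¹ (1 - λᵢ) = γ⁻¹ (1 - λ_min)`.
-/

open Matrix

noncomputable def specNorm {n : ℕ} (M : Matrix (Fin n) (Fin n) ℝ) : ℝ :=
  ‖Matrix.toEuclideanCLM (𝕜 := ℝ) (n := Fin n) M‖

open scoped Matrix.Norms.L2Operator

theorem CStarRing.norm_conjStarAlgAut {S E : Type*} [NormedRing E] [StarRing E] [CStarRing E]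
    [SMul S E] [IsScalarTower S E E] [SMulCommClass S E E] (u : unitary E) (x : E) :
    ‖Unitary.conjStarAlgAut S E u x‖ = ‖x‖ := by
  rw [Unitary.conjStarAlgAut_apply, norm_mul_mem_unitary _ (Unitary.star_mem u.2),
    norm_coe_unitary_mul]

theorem pi_norm_eq_of_nonneg_of_le {ι : Type*} [Fintype ι] {f : ι → ℝ} (hf : 0 ≤ f) {i₀ : ι}
    (hi₀ : ∀ i, f i ≤ f i₀) : ‖f‖ = f i₀ :=
  le_antisymm ((pi_norm_le_iff_of_nonneg (hf i₀)).2 fun i => by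
      rw [Real.norm_of_nonneg (hf i)]; exact hi₀ i)
    ((Real.le_norm_self _).trans (norm_le_pi_norm f i₀))

theorem Matrix.transpose_mul_self_conj_eq_of_lyapunov {n K : Type*} [Fintype n] [DecidableEq n]
    [Field K] {S P Q A : Matrix n n K} {γ : K} (hγ : γ ≠ 0) (hS : IsUnit S.det) (hSsymm : Sᵀ = S)
    (hSP : S * S = P) (hLyap : P = Q + γ • (Aᵀ * P * A)) :
    (S * A * S⁻¹)ᵀ * (S * A * S⁻¹) = γ⁻¹ • (1 - S⁻¹ * Q * S⁻¹) := by
  have hAPA : Aᵀ * P * A = γ⁻¹ • (P - Q) := by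
    rw [← eq_sub_of_add_eq' hLyap.symm, smul_smul, inv_mul_cancel₀ hγ, one_smul]
  have hSPS : S⁻¹ * P * S⁻¹ = 1 := by
    rw [← hSP, Matrix.mul_assoc, mul_nonsing_inv_cancel_right _ _ hS, nonsing_inv_mul _ hS]
  calc (S * A * S⁻¹)ᵀ * (S * A * S⁻¹) = S⁻¹ * (Aᵀ * P * A) * S⁻¹ := by
        simp only [transpose_mul, transpose_nonsing_inv, hSsymm, ← hSP, Matrix.mul_assoc]
    _ = γ⁻¹ • (1 - S⁻¹ * Q * S⁻¹) := by
        rw [hAPA, Matrix.mul_smul, Matrix.smul_mul, Matrix.mul_sub, Matrix.sub_mul, hSPS]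

theorem stmt2_general {n : ℕ} (hn : 0 < n) (P QK AK Psqrt : Matrix (Fin n) (Fin n) ℝ)
    (γ : ℝ) (hγ : γ ∈ Set.Ioo (0 : ℝ) 1)
    (hLyap : P = QK + γ • (AKᵀ * P * AK))
    (hPsqrtPD : Psqrt.PosDef) (hPsqrtSq : Psqrt * Psqrt = P)
    (hM : (Psqrt⁻¹ * QK * Psqrt⁻¹).IsHermitian) :
    specNorm (Psqrt * AK * Psqrt⁻¹) =
      Real.sqrt ((1 / γ) *
        (1 - Finset.univ.inf' (Finset.univ_nonempty_iff.mpr (Fin.pos_iff_nonempty.mp hn))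
          (fun i => hM.eigenvalues i))) := by
  set B := Psqrt * AK * Psqrt⁻¹
  set d : Fin n → ℝ := fun i => γ⁻¹ * (1 - hM.eigenvalues i)
  have hBB : Bᴴ * B = Unitary.conjStarAlgAut ℝ _ hM.eigenvectorUnitary (diagonal d) := by
    have hdiag : diagonal d = γ⁻¹ • (1 - diagonal (RCLike.ofReal ∘ hM.eigenvalues)) := by
      rw [← diagonal_one, diagonal_sub, ← diagonal_smul]; rfl
    rw [conjTranspose_eq_transpose_of_trivial,
      transpose_mul_self_conj_eq_of_lyapunov hγ.1.ne' hPsqrtPD.det_pos.ne'.isUnit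
        hPsqrtPD.isHermitian hPsqrtSq hLyap, hdiag, map_smul, map_sub, map_one,
      ← hM.spectral_theorem]
  have hd_nonneg : 0 ≤ d := by
    have := posSemidef_conjTranspose_mul_self B
    rwa [hBB, Unitary.conjStarAlgAut_apply, IsUnit.posSemidef_star_right_conjugate_iff
      Unitary.isUnit_coe, posSemidef_diagonal_iff] at this
  obtain ⟨i₀, -, hi₀⟩ := Finset.exists_mem_eq_inf'
    (Finset.univ_nonempty_iff.mpr (Fin.pos_iff_nonempty.mp hn)) hM.eigenvalues
  have hd_le : ∀ i, d i ≤ d i₀ := fun i =>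
    mul_le_mul_of_nonneg_left (sub_le_sub_left (hi₀ ▸ Finset.inf'_le _ (Finset.mem_univ i)) 1)
      (inv_nonneg.2 hγ.1.le)
  have hB : specNorm B ^ 2 = d i₀ := by
    rw [specNorm, ← cstar_norm_def, sq, ← l2_opNorm_conjTranspose_mul_self, hBB,
      CStarRing.norm_conjStarAlgAut, l2_opNorm_diagonal,
      pi_norm_eq_of_nonneg_of_le hd_nonneg hd_le]
  rw [one_div, hi₀, show γ⁻¹ * (1 - hM.eigenvalues i₀) = d i₀ from rfl, ← hB]
  exact (Real.sqrt_sq (norm_nonneg _)).symm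

theorem stmt2 {n : ℕ} (hn : 0 < n) (P QK AK Psqrt : Matrix (Fin n) (Fin n) ℝ)
    (hP : P.PosDef) (hQK : QK.PosDef) (γ : ℝ) (hγ : γ ∈ Set.Ioo (0 : ℝ) 1)
    (hLyap : P = QK + γ • (AKᵀ * P * AK))
    (hPsqrtPD : Psqrt.PosDef) (hPsqrtSym : Psqrtᵀ = Psqrt) (hPsqrtSq : Psqrt * Psqrt = P)
    (hM : (Psqrt⁻¹ * QK * Psqrt⁻¹).IsHermitian) :
    specNorm (Psqrt * AK * Psqrt⁻¹) =
      Real.sqrt ((1 / γ) *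
        (1 - Finset.univ.inf' (Finset.univ_nonempty_iff.mpr (Fin.pos_iff_nonempty.mp hn))
          (fun i => hM.eigenvalues i))) :=
  stmt2_general hn P QK AK Psqrt γ hγ hLyap hPsqrtPD hPsqrtSq hM
end

section
/- Let H = [H_{ij}] be an Nn×Nn real block matrix with n×n blocks. For each eigenvalue λ of H, there exists at least one index i ∈ {1,…,N} such that either H_{ii} - λI is singular, or (‖(H_{ii} - λI)^{-1}‖)^{-1} ≤ Σ_{j≠i} ‖H_{ij}‖, where ‖·‖ denotes the spectral norm. -/
/-!
Let `w_j` be the blocks of the eigenvector `v` and pick `i` with `‖w_i‖` maximal, hence nonzero.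
The `i`-th block row of `H v = λ v` reads `(H_ii - λ) w_i = -∑_{j ≠ i} H_ij w_j`, so if
`H_ii - λ` is invertible, `‖w_i‖ ≤ ‖(H_ii - λ)⁻¹‖ ∑_{j ≠ i} ‖H_ij‖ ‖w_j‖
≤ ‖(H_ii - λ)⁻¹‖ (∑_{j ≠ i} ‖H_ij‖) ‖w_i‖`, and dividing by `‖w_i‖` gives the claim.
-/

open Matrix

noncomputable def specNormC {n : ℕ} (M : Matrix (Fin n) (Fin n) ℂ) : ℝ :=
  ‖Matrix.toEuclideanCLM (𝕜 := ℂ) (n := Fin n) M‖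

open Finset

theorem exists_ne_zero_forall_norm_le {ι E : Type*} [Finite ι] [NormedAddCommGroup E]
    {w : ι → E} (hw : w ≠ 0) : ∃ i, w i ≠ 0 ∧ ∀ j, ‖w j‖ ≤ ‖w i‖ := by
  obtain ⟨j, hj⟩ := Function.ne_iff.1 hw
  have : Nonempty ι := ⟨j⟩
  obtain ⟨i, hi⟩ := Finite.exists_max fun i => ‖w i‖
  exact ⟨i, norm_pos_iff.1 ((norm_pos_iff.2 hj).trans_le (hi j)), hi⟩

theorem ContinuousLinearMap.inv_opNorm_le_sum_opNorm {𝕜 E ι : Type*}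
    [NontriviallyNormedField 𝕜] [NormedAddCommGroup E] [NormedSpace 𝕜 E]
    (B R : E →L[𝕜] E) (T : ι → E →L[𝕜] E) (s : Finset ι) (w : ι → E) (x : E) (hx : x ≠ 0)
    (hRB : R (B x) = x) (hBx : B x = -∑ j ∈ s, T j (w j)) (hw : ∀ j ∈ s, ‖w j‖ ≤ ‖x‖) :
    ‖R‖⁻¹ ≤ ∑ j ∈ s, ‖T j‖ := by
  have hbound : ‖x‖ ≤ ‖R‖ * (∑ j ∈ s, ‖T j‖) * ‖x‖ :=
    calc ‖x‖ = ‖R (B x)‖ := by rw [hRB]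
      _ ≤ ‖R‖ * ‖B x‖ := R.le_opNorm _
      _ ≤ ‖R‖ * ((∑ j ∈ s, ‖T j‖) * ‖x‖) := by
        gcongr
        rw [hBx, norm_neg, sum_mul]
        exact (norm_sum_le _ _).trans
          (sum_le_sum fun j hj => (T j).le_opNorm_of_le (hw j hj))
      _ = ‖R‖ * (∑ j ∈ s, ‖T j‖) * ‖x‖ := (mul_assoc _ _ _).symm
  rcases (norm_nonneg R).eq_or_lt with hR | hR
  · rw [← hR, _root_.inv_zero]
    positivity
  · rw [inv_le_iff_one_le_mul₀' hR]
    exact le_of_mul_le_mul_right (by simpa using hbound) (norm_pos_iff.2 hx)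

namespace Matrix

theorem toEuclideanCLM_nonsing_inv_apply_toEuclideanCLM {𝕜 n : Type*} [RCLike 𝕜]
    [Fintype n] [DecidableEq n] {B : Matrix n n 𝕜} (hB : IsUnit B) (x : EuclideanSpace 𝕜 n) :
    toEuclideanCLM (𝕜 := 𝕜) B⁻¹ (toEuclideanCLM (𝕜 := 𝕜) B x) = x := by
  rw [← mul_apply_eq_comp, ← map_mul,
    nonsing_inv_mul B ((isUnit_iff_isUnit_det B).1 hB), map_one,
    one_apply_eq_self]

theorem comp_mulVec_apply {ι κ R : Type*} [Fintype ι] [Fintype κ]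
    [NonUnitalNonAssocSemiring R] (A : Matrix ι ι (Matrix κ κ R)) (v : ι × κ → R) (i : ι)
    (k : κ) : (comp ι ι κ κ R A *ᵥ v) (i, k) = ∑ j, (A i j *ᵥ Function.curry v j) k := by
  simp only [mulVec, dotProduct, comp_apply, Fintype.sum_prod_type, Function.curry_apply]

theorem sub_smul_one_mulVec_curry_of_comp_mulVec_eq_smul {ι κ R : Type*} [Fintype ι]
    [Fintype κ] [DecidableEq ι] [DecidableEq κ] [CommRing R] {A : Matrix ι ι (Matrix κ κ R)}
    {lam : R} {v : ι × κ → R} (h : comp ι ι κ κ R A *ᵥ v = lam • v) (i : ι) :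
    (A i i - lam • 1) *ᵥ Function.curry v i
      = -∑ j ∈ univ.erase i, A i j *ᵥ Function.curry v j := by
  ext k
  have hik := congrFun h (i, k)
  rw [comp_mulVec_apply, ← add_sum_erase _ _ (mem_univ i)] at hik
  simp only [sub_mulVec, smul_mulVec, one_mulVec, Pi.sub_apply, Pi.smul_apply, Pi.neg_apply,
    Finset.sum_apply, Function.curry_apply] at hik ⊢
  linear_combination hik

end Matrix

theorem stmt4 {n N : ℕ} (Hblk : Fin N → Fin N → Matrix (Fin n) (Fin n) ℝ)
    (lam : ℂ) (v : Fin N × Fin n → ℂ) (hv : v ≠ 0)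
    (heig : (Matrix.of fun (p q : Fin N × Fin n) =>
        ((Hblk p.1 q.1).map (Complex.ofReal) : Matrix (Fin n) (Fin n) ℂ) p.2 q.2).mulVec v
      = lam • v) :
    ∃ i : Fin N,
      ¬ IsUnit ((Hblk i i).map Complex.ofReal - lam • (1 : Matrix (Fin n) (Fin n) ℂ)) ∨
      (specNormC (((Hblk i i).map Complex.ofReal - lam • 1)⁻¹))⁻¹ ≤
        ∑ j ∈ Finset.univ.erase i, specNormC ((Hblk i j).map Complex.ofReal) := by
  set w : Fin N → EuclideanSpace ℂ (Fin n) := fun i => WithLp.toLp 2 (Function.curry v i)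
  have hw : w ≠ 0 := fun h => hv <| funext fun p => by
    simpa [w] using congrArg (fun u => u p.1 p.2) h
  obtain ⟨i, hwi, hmax⟩ := exists_ne_zero_forall_norm_le hw
  refine ⟨i, or_iff_not_imp_left.2 fun hU => ?_⟩
  have hrow : ((Hblk i i).map Complex.ofReal - lam • 1) *ᵥ Function.curry v i
      = -∑ j ∈ univ.erase i, (Hblk i j).map Complex.ofReal *ᵥ Function.curry v j :=
    sub_smul_one_mulVec_curry_of_comp_mulVec_eq_smul
      (A := fun i j => (Hblk i j).map Complex.ofReal) heig i
  refine ContinuousLinearMap.inv_opNorm_le_sum_opNorm _ _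
    (fun j => toEuclideanCLM (𝕜 := ℂ) ((Hblk i j).map Complex.ofReal)) _ w (w i) hwi
    (toEuclideanCLM_nonsing_inv_apply_toEuclideanCLM (not_not.1 hU) _) ?_ fun j _ => hmax j
  simp only [w, toEuclideanCLM_toLp, hrow, WithLp.toLp_neg, WithLp.toLp_sum]
end

section
/- Let a ∈ ℝ with |a| < 1, p > 0, γ ∈ (0,1), and N ∈ ℕ with N ≥ 1. Define the N×N symmetric matrix H with entries H_{ij} = γ^i p if i = j, γ^j p a^{j-i} if i < j, and γ^i p a^{i-j} if i > j. Then the leading principal minor of H of order i equals p^i γ^{i(i+1)/2} (1 - γ a^2)^{i-1} for each i = 1,…,N, and consequently H is positive definite. -/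
/-!
Writing `r = γ a` and `s i = γ ^ (i + 1) p`, the matrix is `H i j = r ^ |i - j| * s (min i j)`.
Every such matrix factors as `L D Lᵀ` with `L i j = r ^ (i - j)` for `j ≤ i` (unit lower
triangular) and `D` diagonal with pivots `d 0 = s 0`, `d k = s k - r² s (k - 1)`; here
`d k = γ ^ (k + 1) p (1 - γ a²) > 0` for `k ≥ 1`. Leading principal submatrices belong to the
same family, so each minor is a product of the first pivots, and `H` is positive definite because
`D` is.
-/

open Matrix Finset

namespace Matrix

variable {R : Type*} [CommRing R]

/-- With `s ≡ 1` this is the Kac–Murdock–Szegő matrix `r ^ |i - j|`. -/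
def kmsMatrix (r : R) (s : ℕ → R) (n : ℕ) : Matrix (Fin n) (Fin n) R :=
  of fun i j => r ^ (max i.val j.val - min i.val j.val) * s (min i.val j.val)

def kmsPivot (r : R) (s : ℕ → R) : ℕ → R
  | 0 => s 0
  | k + 1 => s (k + 1) - r ^ 2 * s k

def kmsFactor (r : R) (n : ℕ) : Matrix (Fin n) (Fin n) R :=
  of fun i j => if j ≤ i then r ^ (i.val - j.val) else 0

variable (r : R) (s : ℕ → R)

theorem sum_range_pow_mul_kmsPivot (m : ℕ) :
    ∑ k ∈ range (m + 1), r ^ (2 * (m - k)) * kmsPivot r s k = s m := by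
  induction m with
  | zero => simp [kmsPivot]
  | succ m ih =>
    have hshift : ∀ k ∈ range (m + 1),
        r ^ (2 * (m + 1 - k)) * kmsPivot r s k = r ^ 2 * (r ^ (2 * (m - k)) * kmsPivot r s k) := by
      intro k hk
      rw [show 2 * (m + 1 - k) = 2 + 2 * (m - k) by grind, pow_add, mul_assoc]
    rw [sum_range_succ, sum_congr rfl hshift, ← mul_sum, ih, Nat.sub_self, kmsPivot]
    ring

theorem kmsFactor_mul_diagonal_mul_transpose_apply_of_le (n : ℕ) {i j : Fin n} (hij : i ≤ j) :
    (kmsFactor r n * diagonal (fun k : Fin n => kmsPivot r s k) * (kmsFactor r n)ᵀ) i j =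
      r ^ (j.val - i.val) * s i := by
  let g : ℕ → R := fun k =>
    (if k ≤ i.val then r ^ (i.val - k) else 0) * kmsPivot r s k *
      (if k ≤ j.val then r ^ (j.val - k) else 0)
  have hvanish : ∀ k ∈ range n, k ∉ range (i.val + 1) → g k = 0 := by
    intro k _ hk
    simp [g, show ¬ k ≤ i.val by simpa [Nat.lt_succ_iff] using hk]
  have hterm : ∀ k ∈ range (i.val + 1),
      g k = r ^ (j.val - i.val) * (r ^ (2 * (i.val - k)) * kmsPivot r s k) := by
    intro k hk
    have hki : k ≤ i.val := Nat.lt_succ_iff.mp (mem_range.mp hk)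
    simp only [g, if_pos hki, if_pos (hki.trans hij)]
    rw [show j.val - k = (j.val - i.val) + (i.val - k) by omega, two_mul, pow_add, pow_add]
    ring
  calc _ = ∑ k : Fin n, g k := by
        rw [mul_apply]
        simp only [mul_diagonal, transpose_apply]
        rfl
    _ = ∑ k ∈ range (i.val + 1), g k :=
      (Fin.sum_univ_eq_sum_range g n).trans
        (sum_subset (range_subset_range.mpr i.isLt) hvanish).symm
    _ = r ^ (j.val - i.val) * s i := by
      rw [sum_congr rfl hterm, ← mul_sum, sum_range_pow_mul_kmsPivot]

theorem kmsMatrix_eq_kmsFactor_mul_diagonal_mul_transpose (n : ℕ) :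
    kmsMatrix r s n =
      kmsFactor r n * diagonal (fun k : Fin n => kmsPivot r s k) * (kmsFactor r n)ᵀ := by
  have hsymm :
      (kmsFactor r n * diagonal (fun k : Fin n => kmsPivot r s k) * (kmsFactor r n)ᵀ)ᵀ =
        kmsFactor r n * diagonal (fun k : Fin n => kmsPivot r s k) * (kmsFactor r n)ᵀ := by
    simp [transpose_mul, Matrix.mul_assoc]
  ext i j
  rcases le_total i j with hij | hji
  · rw [kmsFactor_mul_diagonal_mul_transpose_apply_of_le r s n hij]
    simp [kmsMatrix, Fin.le_def.mp hij]
  · rw [← hsymm, transpose_apply, kmsFactor_mul_diagonal_mul_transpose_apply_of_le r s n hji]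
    simp [kmsMatrix, Fin.le_def.mp hji]

theorem det_kmsFactor (n : ℕ) : (kmsFactor r n).det = 1 := by
  rw [det_of_isLowerTriangular (kmsFactor r n) fun i j hij => if_neg (not_le.mpr hij)]
  simp [kmsFactor]

theorem det_kmsMatrix (n : ℕ) : (kmsMatrix r s n).det = ∏ k ∈ range n, kmsPivot r s k := by
  rw [kmsMatrix_eq_kmsFactor_mul_diagonal_mul_transpose, det_mul, det_mul, det_transpose,
    det_kmsFactor, det_diagonal, one_mul, mul_one, Fin.prod_univ_eq_prod_range]

theorem submatrix_castLE_kmsMatrix {m n : ℕ} (h : m ≤ n) :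
    (kmsMatrix r s n).submatrix (Fin.castLE h) (Fin.castLE h) = kmsMatrix r s m :=
  rfl

theorem kmsMatrix_posDef_iff [PartialOrder R] [StarRing R] [StarOrderedRing R] [TrivialStar R]
    [NoZeroDivisors R] [Nontrivial R] (n : ℕ) :
    (kmsMatrix r s n).PosDef ↔ ∀ k : Fin n, 0 < kmsPivot r s k := by
  have hunit : IsUnit (kmsFactor r n) := by
    simp [isUnit_iff_isUnit_det, det_kmsFactor]
  rw [kmsMatrix_eq_kmsFactor_mul_diagonal_mul_transpose, ← conjTranspose_eq_transpose_of_trivial,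
    ← star_eq_conjTranspose, IsUnit.posDef_star_right_conjugate_iff hunit, posDef_diagonal_iff]

end Matrix

section Discounted

variable (a p γ : ℝ)

theorem kmsPivot_discounted_succ (k : ℕ) :
    kmsPivot (γ * a) (fun i => γ ^ (i + 1) * p) (k + 1) =
      γ ^ (k + 2) * p * (1 - γ * a ^ 2) := by
  simp only [kmsPivot]
  ring

theorem prod_range_kmsPivot_discounted (m : ℕ) :
    ∏ k ∈ range (m + 1), kmsPivot (γ * a) (fun i => γ ^ (i + 1) * p) k =
      p ^ (m + 1) * γ ^ ((m + 1) * (m + 2) / 2) * (1 - γ * a ^ 2) ^ m := by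
  induction m with
  | zero => simp [kmsPivot, mul_comm]
  | succ m ih =>
    have hexp : (m + 2) * (m + 3) / 2 = (m + 1) * (m + 2) / 2 + (m + 2) := by
      rw [show (m + 2) * (m + 3) = (m + 1) * (m + 2) + 2 * (m + 2) by ring,
        Nat.add_mul_div_left _ _ two_pos]
    rw [prod_range_succ, ih, kmsPivot_discounted_succ, hexp]
    ring

theorem eq_kmsMatrix_discounted {N : ℕ} (H : Matrix (Fin N) (Fin N) ℝ)
    (hH : ∀ i j : Fin N, H i j =
      if i = j then γ ^ (i.val + 1) * p
      else if i < j then γ ^ (j.val + 1) * p * a ^ (j.val - i.val)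
      else γ ^ (i.val + 1) * p * a ^ (i.val - j.val)) :
    H = kmsMatrix (γ * a) (fun i => γ ^ (i + 1) * p) N := by
  have hpow : ∀ {i j : ℕ}, i ≤ j →
      γ ^ (j + 1) * p * a ^ (j - i) = (γ * a) ^ (j - i) * (γ ^ (i + 1) * p) := by
    intro i j hij
    rw [show j + 1 = (j - i) + (i + 1) by omega, pow_add, mul_pow]
    ring
  ext i j
  rw [hH]
  rcases lt_trichotomy i j with hij | rfl | hji
  · have hij' : i.val ≤ j.val := hij.le
    simp [kmsMatrix, hij.ne, hij, hij', hpow hij']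
  · simp [kmsMatrix]
  · have hji' : j.val ≤ i.val := hji.le
    simp [kmsMatrix, hji.ne', not_lt.mpr hji.le, hji', hpow hji']

end Discounted

theorem stmt8_general {N : ℕ} (a p γ : ℝ) (ha : |a| < 1) (hp : 0 < p)
    (hγ : γ ∈ Set.Ioo (0 : ℝ) 1)
    (H : Matrix (Fin N) (Fin N) ℝ)
    (hH : ∀ i j : Fin N, H i j =
      if i = j then γ ^ (i.val + 1) * p
      else if i < j then γ ^ (j.val + 1) * p * a ^ (j.val - i.val)
      else γ ^ (i.val + 1) * p * a ^ (i.val - j.val)) :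
    (∀ k : Fin N,
      (H.submatrix (Fin.castLE k.isLt : Fin (k.val + 1) → Fin N)
          (Fin.castLE k.isLt : Fin (k.val + 1) → Fin N)).det =
        p ^ (k.val + 1) * γ ^ (((k.val + 1) * (k.val + 2)) / 2) *
          (1 - γ * a ^ 2) ^ k.val) ∧
    H.PosDef := by
  obtain ⟨hγ0, hγ1⟩ := hγ
  have hdiscount : 0 < 1 - γ * a ^ 2 := by
    have ha2 : a ^ 2 < 1 := by simpa using sq_lt_one_iff_abs_lt_one a |>.mpr ha
    nlinarith
  rw [eq_kmsMatrix_discounted a p γ H hH]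
  refine ⟨fun k => ?_, (kmsMatrix_posDef_iff _ _ N).mpr fun k => ?_⟩
  · rw [submatrix_castLE_kmsMatrix, det_kmsMatrix, prod_range_kmsPivot_discounted]
  · rcases k with ⟨_ | k, -⟩
    · simpa [kmsPivot] using mul_pos hγ0 hp
    · rw [kmsPivot_discounted_succ]
      positivity

theorem stmt8 {N : ℕ} (hN : 1 ≤ N) (a p γ : ℝ) (ha : |a| < 1) (hp : 0 < p)
    (hγ : γ ∈ Set.Ioo (0 : ℝ) 1)
    (H : Matrix (Fin N) (Fin N) ℝ)
    (hH : ∀ i j : Fin N, H i j =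
      if i = j then γ ^ (i.val + 1) * p
      else if i < j then γ ^ (j.val + 1) * p * a ^ (j.val - i.val)
      else γ ^ (i.val + 1) * p * a ^ (i.val - j.val)) :
    (∀ k : Fin N,
      (H.submatrix (Fin.castLE k.isLt : Fin (k.val + 1) → Fin N)
          (Fin.castLE k.isLt : Fin (k.val + 1) → Fin N)).det =
        p ^ (k.val + 1) * γ ^ (((k.val + 1) * (k.val + 2)) / 2) *
          (1 - γ * a ^ 2) ^ k.val) ∧
    H.PosDef :=
  stmt8_general a p γ ha hp hγ H hH
end

section
/- Let S : ℝ^m → ℝ be a convex function, and let Z be an ℝ^m-valued random variable with log-concave probability density f_Z. Then the cumulative distribution function F(g) = P[S(Z) ≤ g] = ∫_{{z : S(z) ≤ g}} f_Z(z) dz is a log-concave function of g ∈ ℝ. -/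
/-!
For `0 < θ < 1`, convexity of `S` puts `(1 - θ) • {S ≤ g₁} + θ • {S ≤ g₂}` inside
`{S ≤ (1 - θ) g₁ + θ g₂}`, so the restrictions of `f_Z` to these three sublevel sets satisfy the
hypothesis of the Prékopa–Leindler inequality `(∫ f)^(1-θ) (∫ g)^θ ≤ ∫ h`, whose conclusion is the
claim.

Prékopa–Leindler on `ℝ`: once `sup f = sup g`, the superlevel sets `{f > t}` and `{g > t}` are
empty or nonempty together, and the one-dimensional Brunn–Minkowski inequality
`|A| + |B| ≤ |A + B|` gives `(1 - θ) |{f > t}| + θ |{g > t}| ≤ |{h > t}|`; integrating in `t`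
(layer cake) and using AM–GM gives the multiplicative form. Rescaling `g` achieves `sup f = sup g`
for bounded `f, g`, and truncation removes boundedness. The inequality passes to `ℝⁿ` by Fubini.
-/

open MeasureTheory Set ENNReal
open scoped Pointwise

variable {θ : ℝ}

theorem ENNReal.geom_mean_le_arith_mean2_weighted (hθ0 : 0 < θ) (hθ1 : θ < 1) (a b : ℝ≥0∞) :
    a ^ (1 - θ) * b ^ θ ≤ ENNReal.ofReal (1 - θ) * a + ENNReal.ofReal θ * b := by
  have h1θ : 0 < 1 - θ := sub_pos.2 hθ1
  have young := ENNReal.young_inequality (a ^ (1 - θ)) (b ^ θ)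
    (Real.HolderConjugate.one_sub_inv_inv hθ0 hθ1)
  rwa [ENNReal.rpow_rpow_inv h1θ.ne', ENNReal.rpow_rpow_inv hθ0.ne', div_eq_mul_inv,
    div_eq_mul_inv, ENNReal.ofReal_inv_of_pos h1θ, ENNReal.ofReal_inv_of_pos hθ0, inv_inv,
    inv_inv, mul_comm a, mul_comm b] at young

theorem Real.volume_add_volume_le_volume_add_of_isCompact {K L : Set ℝ} (hK : IsCompact K)
    (hL : IsCompact L) (hKn : K.Nonempty) (hLn : L.Nonempty) :
    volume K + volume L ≤ volume (K + L) := by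
  obtain ⟨k, hkK, hk⟩ := hK.exists_isGreatest hKn
  obtain ⟨l, hlL, hl⟩ := hL.exists_isLeast hLn
  -- the translates `K + l` and `k + L` of `K` and `L` lie in `K + L` and meet only at `k + l`
  have hinter : (K + {l}) ∩ ({k} + L) ⊆ {k + l} := by
    rintro _ ⟨⟨x, hx, _, rfl, rfl⟩, ⟨_, rfl, y, hy, hxy⟩⟩
    have := hk hx
    have := hl hy
    simp only [mem_singleton_iff]
    linarith
  calc volume K + volume L = volume (K + {l}) + volume ({k} + L) := by
        rw [add_singleton, singleton_add, image_add_right, image_add_left,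
          measure_preimage_add_right, measure_preimage_add]
    _ = volume ((K + {l}) ∪ ({k} + L)) := by
        rw [← measure_union_add_inter _ (isCompact_singleton.add hL).measurableSet,
          measure_mono_null hinter (measure_singleton _), add_zero]
    _ ≤ volume (K + L) :=
        measure_mono (union_subset (add_subset_add_left (singleton_subset_iff.2 hlL))
          (add_subset_add_right (singleton_subset_iff.2 hkK)))

theorem Real.volume_add_volume_le_volume_add {A B : Set ℝ} (hA : MeasurableSet A)
    (hB : MeasurableSet B) (hAn : A.Nonempty) (hBn : B.Nonempty) :
    volume A + volume B ≤ volume (A + B) := by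
  obtain ⟨a, ha⟩ := hAn
  obtain ⟨b, hb⟩ := hBn
  rw [hA.measure_eq_iSup_isCompact, hB.measure_eq_iSup_isCompact]
  simp only [iSup_and']
  refine ENNReal.biSup_add_biSup_le' ⟨∅, empty_subset _, isCompact_empty⟩
    ⟨∅, empty_subset _, isCompact_empty⟩ fun K ⟨hKA, hK⟩ L ⟨hLB, hL⟩ => ?_
  calc volume K + volume L ≤ volume (insert a K) + volume (insert b L) :=
        add_le_add (measure_mono (subset_insert _ _)) (measure_mono (subset_insert _ _))
    _ ≤ volume (insert a K + insert b L) :=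
        volume_add_volume_le_volume_add_of_isCompact (hK.insert a) (hL.insert b)
          (insert_nonempty _ _) (insert_nonempty _ _)
    _ ≤ volume (A + B) :=
        measure_mono (add_subset_add (insert_subset ha hKA) (insert_subset hb hLB))

theorem Real.ofReal_mul_volume_add_le_volume_smul_add_smul (hθ0 : 0 < θ) (hθ1 : θ < 1)
    {A B : Set ℝ} (hA : MeasurableSet A) (hB : MeasurableSet B) (hAn : A.Nonempty)
    (hBn : B.Nonempty) :
    ENNReal.ofReal (1 - θ) * volume A + ENNReal.ofReal θ * volume B ≤
      volume ((1 - θ) • A + θ • B) := by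
  have h1θ : 0 < 1 - θ := sub_pos.2 hθ1
  have hsmul {r : ℝ} (hr : 0 ≤ r) (s : Set ℝ) :
      volume (r • s) = ENNReal.ofReal r * volume s := by
    simpa using Measure.addHaar_smul_of_nonneg volume hr s
  rw [← hsmul h1θ.le, ← hsmul hθ0.le]
  exact volume_add_volume_le_volume_add (hA.const_smul_of_ne_zero h1θ.ne')
    (hB.const_smul_of_ne_zero hθ0.ne') hAn.smul_set hBn.smul_set

theorem Real.volume_restrict_Ioi_setOf_ofReal_lt (a : ℝ≥0∞) :
    volume.restrict (Ioi 0) {t : ℝ | ENNReal.ofReal t < a} = a := by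
  rw [Measure.restrict_apply' measurableSet_Ioi]
  rcases eq_or_ne a ⊤ with rfl | ha
  · simp
  have hIoo : {t : ℝ | ENNReal.ofReal t < a} ∩ Ioi 0 = Ioo 0 a.toReal := by
    ext t
    simp only [mem_inter_iff, mem_ofPred_eq, mem_Ioi, mem_Ioo]
    constructor
    · rintro ⟨hta, ht⟩
      exact ⟨ht, (ENNReal.ofReal_lt_iff_lt_toReal ht.le ha).1 hta⟩
    · rintro ⟨ht, hta⟩
      exact ⟨(ENNReal.ofReal_lt_iff_lt_toReal ht.le ha).2 hta, ht⟩
  rw [hIoo, Real.volume_Ioo, sub_zero, ENNReal.ofReal_toReal ha]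

theorem MeasureTheory.lintegral_eq_lintegral_meas_ofReal_lt {α : Type*} [MeasurableSpace α]
    (μ : Measure α) [SFinite μ] {f : α → ℝ≥0∞} (hf : Measurable f) :
    ∫⁻ x, f x ∂μ = ∫⁻ t in Ioi 0, μ {x | ENNReal.ofReal t < f x} := by
  have hE : MeasurableSet {p : α × ℝ | ENNReal.ofReal p.2 < f p.1} :=
    measurableSet_lt (ENNReal.measurable_ofReal.comp measurable_snd) (hf.comp measurable_fst)
  calc ∫⁻ x, f x ∂μ = ∫⁻ x, volume.restrict (Ioi 0) {t : ℝ | ENNReal.ofReal t < f x} ∂μ := by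
        simp only [Real.volume_restrict_Ioi_setOf_ofReal_lt]
    _ = μ.prod (volume.restrict (Ioi 0)) {p | ENNReal.ofReal p.2 < f p.1} :=
        (Measure.prod_apply hE).symm
    _ = ∫⁻ t in Ioi 0, μ {x | ENNReal.ofReal t < f x} := Measure.prod_apply_symm hE

theorem Real.prekopaLeindler_additive_of_iSup_eq (hθ0 : 0 < θ) (hθ1 : θ < 1)
    {f g h : ℝ → ℝ≥0∞} (hf : Measurable f) (hg : Measurable g) (hh : Measurable h)
    (hfg : ⨆ x, f x = ⨆ x, g x)
    (hfgh : ∀ x y, f x ^ (1 - θ) * g y ^ θ ≤ h ((1 - θ) * x + θ * y)) :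
    ENNReal.ofReal (1 - θ) * (∫⁻ x, f x) + ENNReal.ofReal θ * ∫⁻ x, g x ≤ ∫⁻ x, h x := by
  have h1θ : 0 < 1 - θ := sub_pos.2 hθ1
  have level (t : ℝ) (ht : t ∈ Ioi 0) :
      ENNReal.ofReal (1 - θ) * volume {x | ENNReal.ofReal t < f x} +
        ENNReal.ofReal θ * volume {x | ENNReal.ofReal t < g x} ≤
      volume {x | ENNReal.ofReal t < h x} := by
    by_cases hlt : ENNReal.ofReal t < ⨆ x, f x
    · obtain ⟨a, ha⟩ := lt_iSup_iff.1 hlt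
      obtain ⟨b, hb⟩ := lt_iSup_iff.1 (hfg ▸ hlt)
      refine (ofReal_mul_volume_add_le_volume_smul_add_smul hθ0 hθ1 (hf measurableSet_Ioi)
        (hg measurableSet_Ioi) ⟨a, ha⟩ ⟨b, hb⟩).trans (measure_mono ?_)
      rintro _ ⟨_, ⟨x, hx, rfl⟩, _, ⟨y, hy, rfl⟩, rfl⟩
      have ht0 : ENNReal.ofReal t ≠ 0 := (ENNReal.ofReal_pos.2 ht).ne'
      calc ENNReal.ofReal t = ENNReal.ofReal t ^ (1 - θ) * ENNReal.ofReal t ^ θ := by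
            rw [← ENNReal.rpow_add _ _ ht0 ENNReal.ofReal_ne_top, sub_add_cancel,
              ENNReal.rpow_one]
        _ < f x ^ (1 - θ) * g y ^ θ :=
            ENNReal.mul_lt_mul (ENNReal.rpow_lt_rpow hx h1θ) (ENNReal.rpow_lt_rpow hy hθ0)
        _ ≤ h ((1 - θ) • x + θ • y) := hfgh x y
    · have hempty {k : ℝ → ℝ≥0∞} (hk : ⨆ x, k x ≤ ENNReal.ofReal t) :
          {x | ENNReal.ofReal t < k x} = ∅ :=
        eq_empty_of_forall_notMem fun x hx => ((le_iSup k x).trans hk).not_gt hx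
      rw [not_lt] at hlt
      simp [hempty hlt, hempty (hfg ▸ hlt)]
  calc ENNReal.ofReal (1 - θ) * (∫⁻ x, f x) + ENNReal.ofReal θ * ∫⁻ x, g x
      = (∫⁻ t in Ioi 0, ENNReal.ofReal (1 - θ) * volume {x | ENNReal.ofReal t < f x}) +
          ∫⁻ t in Ioi 0, ENNReal.ofReal θ * volume {x | ENNReal.ofReal t < g x} := by
        rw [lintegral_eq_lintegral_meas_ofReal_lt volume hf,
          lintegral_eq_lintegral_meas_ofReal_lt volume hg,
          lintegral_const_mul' _ _ ENNReal.ofReal_ne_top,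
          lintegral_const_mul' _ _ ENNReal.ofReal_ne_top]
    _ ≤ ∫⁻ t in Ioi 0, (ENNReal.ofReal (1 - θ) * volume {x | ENNReal.ofReal t < f x} +
          ENNReal.ofReal θ * volume {x | ENNReal.ofReal t < g x}) := le_lintegral_add _ _
    _ ≤ ∫⁻ t in Ioi 0, volume {x | ENNReal.ofReal t < h x} :=
        setLIntegral_mono' measurableSet_Ioi level
    _ = ∫⁻ x, h x := (lintegral_eq_lintegral_meas_ofReal_lt volume hh).symm

theorem Real.prekopaLeindler_of_iSup_ne_top (hθ0 : 0 < θ) (hθ1 : θ < 1)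
    {f g h : ℝ → ℝ≥0∞} (hf : Measurable f) (hg : Measurable g) (hh : Measurable h)
    (hf_top : ⨆ x, f x ≠ ⊤) (hg_top : ⨆ x, g x ≠ ⊤)
    (hfgh : ∀ x y, f x ^ (1 - θ) * g y ^ θ ≤ h ((1 - θ) * x + θ * y)) :
    (∫⁻ x, f x) ^ (1 - θ) * (∫⁻ x, g x) ^ θ ≤ ∫⁻ x, h x := by
  have h1θ : 0 < 1 - θ := sub_pos.2 hθ1
  rcases eq_or_ne (⨆ x, f x) 0 with hf0 | hf0
  · simp [ENNReal.iSup_eq_zero.1 hf0, ENNReal.zero_rpow_of_pos h1θ]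
  rcases eq_or_ne (⨆ x, g x) 0 with hg0 | hg0
  · simp [ENNReal.iSup_eq_zero.1 hg0, ENNReal.zero_rpow_of_pos hθ0]
  set c := (⨆ x, f x) / ⨆ x, g x
  have hc0 : c ^ θ ≠ 0 :=
    (ENNReal.rpow_pos (ENNReal.div_pos hf0 hg_top) (ENNReal.div_ne_top hf_top hg0)).ne'
  have hc_top : c ^ θ ≠ ⊤ :=
    ENNReal.rpow_ne_top_of_nonneg hθ0.le (ENNReal.div_ne_top hf_top hg0)
  have hadd := prekopaLeindler_additive_of_iSup_eq hθ0 hθ1 hf (hg.const_mul c)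
    (hh.const_mul (c ^ θ)) (by rw [← ENNReal.mul_iSup, ENNReal.div_mul_cancel hg0 hg_top])
    fun x y => by
      rw [ENNReal.mul_rpow_of_nonneg _ _ hθ0.le, mul_left_comm]
      exact mul_le_mul_right (hfgh x y) _
  rw [lintegral_const_mul _ hg, lintegral_const_mul _ hh] at hadd
  refine (ENNReal.mul_le_mul_iff_right hc0 hc_top).1 ?_
  calc c ^ θ * ((∫⁻ x, f x) ^ (1 - θ) * (∫⁻ x, g x) ^ θ)
      = (∫⁻ x, f x) ^ (1 - θ) * (c * ∫⁻ x, g x) ^ θ := by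
        rw [ENNReal.mul_rpow_of_nonneg _ _ hθ0.le]
        ring
    _ ≤ ENNReal.ofReal (1 - θ) * (∫⁻ x, f x) + ENNReal.ofReal θ * (c * ∫⁻ x, g x) :=
        ENNReal.geom_mean_le_arith_mean2_weighted hθ0 hθ1 _ _
    _ ≤ c ^ θ * ∫⁻ x, h x := hadd

def PrekopaLeindler (θ : ℝ) {α : Type*} [Add α] [SMul ℝ α] [MeasurableSpace α]
    (μ : Measure α) : Prop :=
  ∀ f g h : α → ℝ≥0∞, Measurable f → Measurable g → Measurable h →
    (∀ x y, f x ^ (1 - θ) * g y ^ θ ≤ h ((1 - θ) • x + θ • y)) →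
    (∫⁻ x, f x ∂μ) ^ (1 - θ) * (∫⁻ x, g x ∂μ) ^ θ ≤ ∫⁻ x, h x ∂μ

namespace PrekopaLeindler

variable {α β : Type*} [MeasurableSpace α] [MeasurableSpace β]

theorem volume_real (hθ0 : 0 < θ) (hθ1 : θ < 1) : PrekopaLeindler θ (volume : Measure ℝ) := by
  intro f g h hf hg hh hfgh
  have h1θ : 0 < 1 - θ := sub_pos.2 hθ1
  have htrunc {k : ℝ → ℝ≥0∞} (hk : Measurable k) :
      ∫⁻ x, k x = ⨆ n : ℕ, ∫⁻ x, min (k x) n := by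
    rw [← lintegral_iSup (fun n => hk.min measurable_const)
      fun m n hmn x => min_le_min le_rfl (Nat.cast_le.2 hmn)]
    simp only [← inf_iSup_eq, ENNReal.iSup_natCast, inf_top_eq]
  have hbdd {k : ℝ → ℝ≥0∞} (n : ℕ) : ⨆ x, min (k x) n ≠ ⊤ :=
    ne_top_of_le_ne_top (ENNReal.natCast_ne_top n) (iSup_le fun x => min_le_right _ _)
  have hpow {p : ℝ} (hp : 0 < p) (u : ℕ → ℝ≥0∞) : (⨆ n, u n) ^ p = ⨆ n, u n ^ p :=
    (ENNReal.orderIsoRpow p hp).map_iSup u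
  rw [htrunc hf, htrunc hg, hpow h1θ, hpow hθ0, ENNReal.iSup_mul]
  refine iSup_le fun m => ?_
  rw [ENNReal.mul_iSup]
  refine iSup_le fun n => ?_
  exact Real.prekopaLeindler_of_iSup_ne_top hθ0 hθ1 (hf.min measurable_const)
    (hg.min measurable_const) hh (hbdd m) (hbdd n) fun x y =>
      (mul_le_mul' (ENNReal.rpow_le_rpow (min_le_left _ _) h1θ.le)
        (ENNReal.rpow_le_rpow (min_le_left _ _) hθ0.le)).trans (hfgh x y)

theorem of_unique [Unique α] [Add α] [SMul ℝ α] (μ : Measure α) [IsProbabilityMeasure μ] :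
    PrekopaLeindler θ μ := by
  intro f g h _ _ _ hfgh
  simp only [lintegral_unique, measure_univ, mul_one]
  simpa only [Unique.eq_default] using hfgh default default

theorem prod [Add α] [SMul ℝ α] [Add β] [SMul ℝ β] {μ : Measure α} {ν : Measure β} [SFinite ν]
    (hμ : PrekopaLeindler θ μ) (hν : PrekopaLeindler θ ν) : PrekopaLeindler θ (μ.prod ν) := by
  intro f g h hf hg hh hfgh
  rw [lintegral_prod _ hf.aemeasurable, lintegral_prod _ hg.aemeasurable,
    lintegral_prod _ hh.aemeasurable]
  exact hμ _ _ _ hf.lintegral_prod_right' hg.lintegral_prod_right' hh.lintegral_prod_right'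
    fun a b => hν _ _ _ (hf.comp measurable_prodMk_left) (hg.comp measurable_prodMk_left)
      (hh.comp measurable_prodMk_left) fun x y => hfgh (a, x) (b, y)

theorem of_measurePreserving [AddCommMonoid α] [Module ℝ α] [AddCommMonoid β] [Module ℝ β]
    {μ : Measure α} {ν : Measure β} (hν : PrekopaLeindler θ ν) (e : β →ₗ[ℝ] α)
    (he : MeasurePreserving e ν μ) : PrekopaLeindler θ μ := by
  intro f g h hf hg hh hfgh
  rw [← he.lintegral_comp hf, ← he.lintegral_comp hg, ← he.lintegral_comp hh]
  exact hν _ _ _ (hf.comp he.measurable) (hg.comp he.measurable) (hh.comp he.measurable)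
    fun x y => by simpa only [Function.comp_apply, map_add, map_smul] using hfgh (e x) (e y)

theorem volume_pi (hθ0 : 0 < θ) (hθ1 : θ < 1) :
    ∀ n : ℕ, PrekopaLeindler θ (volume : Measure (Fin n → ℝ))
  | 0 =>
    have : IsProbabilityMeasure (volume : Measure (Fin 0 → ℝ)) :=
      ⟨by rw [MeasureTheory.volume_pi, Measure.pi_univ]; simp⟩
    of_unique _
  | n + 1 => by
    let e := Fin.consLinearEquiv ℝ fun _ : Fin (n + 1) => ℝ
    have he : MeasurePreserving e volume volume := by
      have hcons : ⇑e = (MeasurableEquiv.piFinSuccAbove (fun _ : Fin (n + 1) => ℝ) 0).symm := by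
        funext p
        simp only [e, MeasurableEquiv.piFinSuccAbove_symm_apply, Fin.insertNthEquiv_zero]
        rfl
      rw [hcons]
      exact (volume_preserving_piFinSuccAbove (fun _ : Fin (n + 1) => ℝ) 0).symm
    exact ((volume_real hθ0 hθ1).prod (volume_pi hθ0 hθ1 n)).of_measurePreserving
      e.toLinearMap he

end PrekopaLeindler

theorem Set.indicator_rpow_mul_indicator_rpow_le {E : Type*} [Add E] [SMul ℝ E]
    (hθ0 : 0 < θ) (hθ1 : θ < 1) {F : E → ℝ≥0∞}
    (hF : ∀ x y, F x ^ (1 - θ) * F y ^ θ ≤ F ((1 - θ) • x + θ • y)) {A B C : Set E}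
    (hABC : ∀ x ∈ A, ∀ y ∈ B, (1 - θ) • x + θ • y ∈ C) (x y : E) :
    A.indicator F x ^ (1 - θ) * B.indicator F y ^ θ ≤ C.indicator F ((1 - θ) • x + θ • y) := by
  by_cases hx : x ∈ A
  · by_cases hy : y ∈ B
    · simpa only [indicator_of_mem hx, indicator_of_mem hy, indicator_of_mem (hABC x hx y hy)]
        using hF x y
    · simp [indicator_of_notMem hy, ENNReal.zero_rpow_of_pos hθ0]
  · simp [indicator_of_notMem hx, ENNReal.zero_rpow_of_pos (sub_pos.2 hθ1)]

theorem PrekopaLeindler.setIntegral_sublevel_rpow_mul_le {E : Type*} [AddCommGroup E]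
    [Module ℝ E] [MeasurableSpace E] {μ : Measure E} (hμ : PrekopaLeindler θ μ)
    (hθ0 : 0 < θ) (hθ1 : θ < 1) {S : E → ℝ} (hS : ConvexOn ℝ univ S) (hSm : Measurable S)
    {f : E → ℝ} (hfm : Measurable f) (hf0 : ∀ z, 0 ≤ f z) (hfi : Integrable f μ)
    (hf : ∀ z₁ z₂, f z₁ ^ (1 - θ) * f z₂ ^ θ ≤ f ((1 - θ) • z₁ + θ • z₂)) (g₁ g₂ : ℝ) :
    (∫ z in {z | S z ≤ g₁}, f z ∂μ) ^ (1 - θ) * (∫ z in {z | S z ≤ g₂}, f z ∂μ) ^ θ ≤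
      ∫ z in {z | S z ≤ (1 - θ) * g₁ + θ * g₂}, f z ∂μ := by
  have h1θ : 0 < 1 - θ := sub_pos.2 hθ1
  have hsub (g : ℝ) : MeasurableSet {z | S z ≤ g} := measurableSet_le hSm measurable_const
  have hI (g : ℝ) : 0 ≤ ∫ z in {z | S z ≤ g}, f z ∂μ :=
    setIntegral_nonneg (hsub g) fun z _ => hf0 z
  have hofReal (g : ℝ) : ENNReal.ofReal (∫ z in {z | S z ≤ g}, f z ∂μ) =
      ∫⁻ z, {z | S z ≤ g}.indicator (fun z => ENNReal.ofReal (f z)) z ∂μ := by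
    rw [lintegral_indicator (hsub g),
      ofReal_integral_eq_lintegral_ofReal hfi.integrableOn (ae_of_all _ hf0)]
  have hF (x y : E) : ENNReal.ofReal (f x) ^ (1 - θ) * ENNReal.ofReal (f y) ^ θ ≤
      ENNReal.ofReal (f ((1 - θ) • x + θ • y)) := by
    rw [ENNReal.ofReal_rpow_of_nonneg (hf0 x) h1θ.le, ENNReal.ofReal_rpow_of_nonneg (hf0 y) hθ0.le,
      ← ENNReal.ofReal_mul (Real.rpow_nonneg (hf0 x) _)]
    exact ENNReal.ofReal_le_ofReal (hf x y)
  have hconv : ∀ x ∈ {z | S z ≤ g₁}, ∀ y ∈ {z | S z ≤ g₂},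
      (1 - θ) • x + θ • y ∈ {z | S z ≤ (1 - θ) * g₁ + θ * g₂} := fun x hx y hy =>
    (hS.2 (mem_univ x) (mem_univ y) h1θ.le hθ0.le (sub_add_cancel 1 θ)).trans
      (add_le_add (mul_le_mul_of_nonneg_left hx h1θ.le) (mul_le_mul_of_nonneg_left hy hθ0.le))
  rw [← ENNReal.ofReal_le_ofReal_iff (hI _), ENNReal.ofReal_mul (Real.rpow_nonneg (hI _) _),
    ← ENNReal.ofReal_rpow_of_nonneg (hI _) h1θ.le, ← ENNReal.ofReal_rpow_of_nonneg (hI _) hθ0.le,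
    hofReal, hofReal, hofReal]
  exact hμ _ _ _ (hfm.ennreal_ofReal.indicator (hsub _)) (hfm.ennreal_ofReal.indicator (hsub _))
    (hfm.ennreal_ofReal.indicator (hsub _)) (indicator_rpow_mul_indicator_rpow_le hθ0 hθ1 hF hconv)

theorem stmt12 {m : ℕ} (S : (Fin m → ℝ) → ℝ) (hS : ConvexOn ℝ Set.univ S)
    (fZ : (Fin m → ℝ) → ℝ) (hmeas : Measurable fZ) (hfZ0 : ∀ z, 0 ≤ fZ z)
    (hdens : ∫ z, fZ z = 1)
    (hfZlc : ∀ (z₁ z₂ : Fin m → ℝ) (θ : ℝ), 0 ≤ θ → θ ≤ 1 →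
      fZ ((1 - θ) • z₁ + θ • z₂) ≥ fZ z₁ ^ (1 - θ) * fZ z₂ ^ θ) :
    ∀ (g₁ g₂ θ : ℝ), 0 ≤ θ → θ ≤ 1 →
      (∫ z in {z : Fin m → ℝ | S z ≤ (1 - θ) * g₁ + θ * g₂}, fZ z) ≥
        (∫ z in {z : Fin m → ℝ | S z ≤ g₁}, fZ z) ^ (1 - θ) *
          (∫ z in {z : Fin m → ℝ | S z ≤ g₂}, fZ z) ^ θ := by
  intro g₁ g₂ θ hθ0 hθ1
  rcases hθ0.eq_or_lt with rfl | hθ0'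
  · simp
  rcases hθ1.eq_or_lt with rfl | hθ1'
  · simp
  have hint : Integrable fZ := by
    by_contra h
    simp [integral_undef h] at hdens
  exact (PrekopaLeindler.volume_pi hθ0' hθ1' m).setIntegral_sublevel_rpow_mul_le hθ0' hθ1' hS
    hS.locallyLipschitz.continuous.measurable hmeas hfZ0 hint
    (fun z₁ z₂ => hfZlc z₁ z₂ θ hθ0 hθ1) g₁ g₂
end
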